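/- Let n ≥ 2 and let ∼ be a congruence of the near-semiring 𝒩 that is not the universal relation 𝒩 × 𝒩. If there exist two distinct nonzero elements f, g ∈ 𝒩 (that is, f, g ∈ A^+(B_n) with f ≠ g) such that f ∼ g, then ∼ equals (A^+(B_n) × A^+(B_n)) ∪ {(0,0)}. -/

import Mathlib

/-!
Common setup: the Brandt semigroup `B n`, self-maps with pointwise addition and
composition product, affine maps, the affine near-semiring `A⁺(Bₙ)`, and the
zero-symmetric near-semiring `𝒩 = A⁺(Bₙ) ∪ {0}`.
-/

/-- The Brandt semigroup `Bₙ`: pairs `(i,j)` with `i,j ∈ [n]`, together with the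
zero element `ϑ` (represented by `none`). -/
abbrev B (n : ℕ) : Type := Option (Fin n × Fin n)

/-- Addition in the Brandt semigroup: `(i,j)+(k,l) = (i,l)` if `j = k`, and `ϑ` otherwise;
`ϑ` is absorbing. -/
def badd {n : ℕ} : B n → B n → B n
  | some (i, j), some (k, l) => if j = k then some (i, l) else none
  | _, _ => none

/-- Pointwise addition of self-maps of `B n`:  `x(f+g) = xf + xg`. -/
def madd {n : ℕ} (f g : B n → B n) : B n → B n := fun x => badd (f x) (g x)

/-- The product of self-maps of `B n`: `x(fg) = (xf)g`. -/
def mcomp {n : ℕ} (f g : B n → B n) : B n → B n := fun x => g (f x)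

/-- An additive endomorphism of the Brandt semigroup. -/
def IsEndo {n : ℕ} (e : B n → B n) : Prop := ∀ a b, e (badd a b) = badd (e a) (e b)

/-- An affine map: the pointwise sum of an additive endomorphism and a constant map. -/
def IsAffine {n : ℕ} (f : B n → B n) : Prop :=
  ∃ e c, IsEndo e ∧ ∀ x, f x = badd (e x) c

/-- `A⁺(Bₙ)`: the subsemigroup of `(M(Bₙ), +)` generated by the affine maps. -/
inductive Aplus (n : ℕ) : (B n → B n) → Prop
  | affine {f : B n → B n} : IsAffine f → Aplus n f
  | add {f g : B n → B n} : Aplus n f → Aplus n g → Aplus n (madd f g)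

lemma isEndo_constBot {n : ℕ} : IsEndo (fun _ : B n => (none : B n)) := by
  intro a b; rfl

lemma isEndo_constIdem {n : ℕ} (p : Fin n) :
    IsEndo (fun _ : B n => (some (p, p) : B n)) := by
  intro a b; simp [badd]

/-- Every constant map is affine. -/
lemma isAffine_const {n : ℕ} (c : B n) : IsAffine (fun _ : B n => c) := by
  match c with
  | none => exact ⟨fun _ => none, none, isEndo_constBot, fun x => rfl⟩
  | some (p, q) =>
      exact ⟨fun _ => some (p, p), some (p, q), isEndo_constIdem p, fun x => by simp [badd]⟩

lemma aplus_const {n : ℕ} (c : B n) : Aplus n (fun _ : B n => c) :=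
  Aplus.affine (isAffine_const c)

lemma aplus_comp_endo {n : ℕ} {e : B n → B n} (he : IsEndo e)
    {f : B n → B n} (hf : Aplus n f) : Aplus n (fun x => e (f x)) := by
  induction hf with
  | affine h =>
      rename_i f0
      obtain ⟨e', c, he', hfe⟩ := h
      refine Aplus.affine ⟨fun x => e (e' x), e c, fun a b => ?_, fun x => ?_⟩
      · show e (e' (badd a b)) = badd (e (e' a)) (e (e' b))
        rw [he', he]
      · show e (f0 x) = badd (e (e' x)) (e c)
        rw [hfe, he]
  | add h1 h2 ih1 ih2 =>
      rename_i g1 g2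
      have heq : (fun x => e (madd g1 g2 x))
          = madd (fun x => e (g1 x)) (fun x => e (g2 x)) := by
        funext x; exact he (g1 x) (g2 x)
      rw [heq]
      exact Aplus.add ih1 ih2

/-- `A⁺(Bₙ)` is closed under the product. -/
lemma aplus_comp {n : ℕ} {f g : B n → B n} (hf : Aplus n f) (hg : Aplus n g) :
    Aplus n (mcomp f g) := by
  induction hg with
  | affine h =>
      rename_i g0
      obtain ⟨e, c, he, hge⟩ := h
      have heq : mcomp f g0 = madd (fun x => e (f x)) (fun _ => c) := by
        funext x; exact hge (f x)
      rw [heq]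
      exact Aplus.add (aplus_comp_endo he hf) (aplus_const c)
  | add h1 h2 ih1 ih2 =>
      exact Aplus.add ih1 ih2

/-- `𝒩 = A⁺(Bₙ) ∪ {0}`: the zero-symmetric affine near-semiring, with a new
zero element `0` (represented by `none`) adjoined to `A⁺(Bₙ)`. -/
abbrev N (n : ℕ) : Type := Option {f : B n → B n // Aplus n f}

instance (n : ℕ) : Zero (N n) := ⟨none⟩

/-- Addition in `𝒩`: `0` is the additive identity; on `A⁺(Bₙ)` it is pointwise addition. -/
instance (n : ℕ) : Add (N n) :=
  ⟨fun a b =>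
    match a, b with
    | none, b => b
    | a, none => a
    | some f, some g => some ⟨madd f.1 g.1, Aplus.add f.2 g.2⟩⟩

/-- Multiplication in `𝒩`: `0` is absorbing; on `A⁺(Bₙ)` it is the product `fg`. -/
instance (n : ℕ) : Mul (N n) :=
  ⟨fun a b =>
    match a, b with
    | some f, some g => some ⟨mcomp f.1 g.1, aplus_comp f.2 g.2⟩
    | _, _ => none⟩

/-- The element of `𝒩` determined by a map in `A⁺(Bₙ)`. -/
def ofA {n : ℕ} {f : B n → B n} (hf : Aplus n f) : N n := some ⟨f, hf⟩

/-- The constant map `ξ_c`, as an element of `𝒩`. -/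
def xiN (n : ℕ) (c : B n) : N n := ofA (aplus_const c)

/-- `𝒞 = C_{Bₙ} ∪ {0}`: the constant maps together with `0`, as a subset of `𝒩`. -/
def Cset (n : ℕ) : Set (N n) := insert 0 (Set.range (xiN n))

/-- The relation `(A⁺(Bₙ) × A⁺(Bₙ)) ∪ {(0,0)}` on `𝒩`. -/
def theta (n : ℕ) (a b : N n) : Prop := (a ≠ 0 ∧ b ≠ 0) ∨ (a = 0 ∧ b = 0)

/-- A congruence of the semigroup `(𝒩, +)`. -/
structure IsAddCong (n : ℕ) (r : N n → N n → Prop) : Prop where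
  refl : ∀ a, r a a
  symm : ∀ {a b}, r a b → r b a
  trans : ∀ {a b c}, r a b → r b c → r a c
  add_right : ∀ {a b} (c), r a b → r (a + c) (b + c)
  add_left : ∀ {a b} (c), r a b → r (c + a) (c + b)

/-- The equivalence relations on `𝒩` whose class of `0` is a right ideal:
compatible with `+` on both sides and with `·` on the right. -/
structure IsRightCong (n : ℕ) (r : N n → N n → Prop) extends IsAddCong n r : Prop where
  mul_right : ∀ {a b} (c), r a b → r (a * c) (b * c)

/-- A congruence of the near-semiring `𝒩`. -/
structure IsNSCong (n : ℕ) (r : N n → N n → Prop) extends IsAddCong n r : Prop where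
  mul_right : ∀ {a b} (c), r a b → r (a * c) (b * c)
  mul_left : ∀ {a b} (c), r a b → r (c * a) (c * b)

/-- The singleton-support map `σ^{(k,l)}_{(p,q)}` sending `(k,l)` to `(p,q)` and
everything else to `ϑ`. -/
def sgl {n : ℕ} (k l p q : Fin n) : B n → B n :=
  fun x => if x = some (k, l) then some (p, q) else none

/-- The `n`-support map `(p,q;σ)` sending `(i,p)` to `(iσ,q)` and everything else to `ϑ`. -/
def nsupp {n : ℕ} (p q : Fin n) (σ : Equiv.Perm (Fin n)) : B n → B n
  | some (i, j) => if j = p then some (σ i, q) else none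
  | none => none

/-- The endomorphism `(i,j) ↦ (iσ, jσ)` of `Bₙ`. -/
def permEndo {n : ℕ} (σ : Equiv.Perm (Fin n)) : B n → B n
  | some (i, j) => some (σ i, σ j)
  | none => none

lemma isEndo_permEndo {n : ℕ} (σ : Equiv.Perm (Fin n)) : IsEndo (permEndo σ) := by
  rintro (_ | ⟨i, j⟩) (_ | ⟨k, l⟩) <;> simp [badd, permEndo]
  by_cases h : j = k
  · simp [h, permEndo]
  · simp [h, fun hc => h (σ.injective hc), permEndo, badd]

lemma aplus_nsupp {n : ℕ} (p q : Fin n) (σ : Equiv.Perm (Fin n)) :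
    Aplus n (nsupp p q σ) := by
  refine Aplus.affine ⟨permEndo σ, some (σ p, q), isEndo_permEndo σ, ?_⟩
  rintro (_ | ⟨i, j⟩)
  · rfl
  · show nsupp p q σ (some (i, j)) = badd (some (σ i, σ j)) (some (σ p, q))
    by_cases h : j = p
    · simp [nsupp, badd, h]
    · simp [nsupp, badd, h, fun hc => h (σ.injective hc)]

lemma sgl_eq_madd {n : ℕ} (k l p q : Fin n) :
    sgl k l p q = madd (fun _ : B n => (some (p, q) : B n)) (nsupp l q (Equiv.swap k q)) := by
  funext x
  rcases x with _ | ⟨i, j⟩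
  · rfl
  · by_cases hj : j = l
    · by_cases hi : i = k
      · subst hi; subst hj
        simp [sgl, madd, nsupp, badd, Equiv.swap_apply_left]
      · have hs : Equiv.swap k q i ≠ q := fun hc =>
          hi ((Equiv.swap k q).injective (hc.trans (Equiv.swap_apply_left k q).symm))
        simp [sgl, madd, nsupp, badd, hj, hi, Ne.symm hs]
    · simp [sgl, madd, nsupp, badd, hj]

lemma aplus_sgl {n : ℕ} (k l p q : Fin n) : Aplus n (sgl k l p q) := by
  rw [sgl_eq_madd]
  exact Aplus.add (aplus_const _) (aplus_nsupp _ _ _)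

/-- The singleton-support map `σ^{(k,l)}_{(p,q)}`, as an element of `𝒩`. -/
def sglN (n : ℕ) (k l p q : Fin n) : N n := ofA (aplus_sgl k l p q)

/-- The `n`-support map `(p,q;σ)`, as an element of `𝒩`. -/
def nsuppN (n : ℕ) (p q : Fin n) (σ : Equiv.Perm (Fin n)) : N n := ofA (aplus_nsupp p q σ)

/-!
Left multiplication by a constant map `ξ_x` evaluates at `x`, so two distinct congruent maps
yield two distinct congruent constants; right multiplication by a singleton-support map then
makes every `ξ_{(k,l)}` congruent to `ξ_ϑ`. Every map of `A⁺(Bₙ)` takes its nonzero values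
in a single column `q`, so adding `ξ_{(q,q)}` fixes it while adding `ξ_ϑ` sends it to `ξ_ϑ`:
all nonzero elements form one class, and `0` is alone in its class unless `∼` is universal.
-/

section Brandt

variable {n : ℕ}

lemma badd_none_right (a : B n) : badd a none = none := by
  rcases a with _ | _ <;> rfl

lemma badd_assoc (a b c : B n) : badd (badd a b) c = badd a (badd b c) := by
  rcases a with _ | ⟨i, j⟩ <;> rcases b with _ | ⟨k, l⟩ <;> rcases c with _ | ⟨p, q⟩ <;>
    simp only [badd] <;> split_ifs <;> simp_all

lemma exists_badd_idem_eq_self [NeZero n] (c : B n) : ∃ q, badd c (some (q, q)) = c := by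
  rcases c with _ | ⟨i, j⟩
  · exact ⟨0, rfl⟩
  · exact ⟨j, by simp [badd]⟩

/-- The nonzero values of a map in `A⁺(Bₙ)` all lie in one column `q`. -/
lemma Aplus.exists_badd_idem_eq_self [NeZero n] {f : B n → B n} (hf : Aplus n f) :
    ∃ q, ∀ x, badd (f x) (some (q, q)) = f x := by
  induction hf with
  | @affine f hf =>
    obtain ⟨e, c, -, hfe⟩ := hf
    obtain ⟨q, hq⟩ := _root_.exists_badd_idem_eq_self c
    exact ⟨q, fun x => by rw [hfe, badd_assoc, hq]⟩
  | @add f g _ _ _ ihg =>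
    obtain ⟨q, hq⟩ := ihg
    exact ⟨q, fun x => by simp only [madd]; rw [badd_assoc, hq]⟩

end Brandt

section NearSemiring

variable {n : ℕ}

lemma ofA_congr {f g : B n → B n} (hf : Aplus n f) (hg : Aplus n g) (h : f = g) :
    ofA hf = ofA hg := by
  subst h; rfl

lemma xiN_mul_ofA (x : B n) {f : B n → B n} (hf : Aplus n f) :
    xiN n x * ofA hf = xiN n (f x) :=
  rfl

lemma ofA_add_xiN_none {f : B n → B n} (hf : Aplus n f) :
    ofA hf + xiN n none = xiN n none :=
  ofA_congr _ _ (funext fun x => badd_none_right (f x))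

lemma Aplus.exists_ofA_add_xiN_eq_self [NeZero n] {f : B n → B n} (hf : Aplus n f) :
    ∃ q, ofA hf + xiN n (some (q, q)) = ofA hf := by
  obtain ⟨q, hq⟩ := hf.exists_badd_idem_eq_self
  exact ⟨q, ofA_congr _ _ (funext hq)⟩

lemma ne_zero_iff_exists_ofA {a : N n} : a ≠ 0 ↔ ∃ f, ∃ hf : Aplus n f, a = ofA hf := by
  rcases a with _ | ⟨f, hf⟩
  · exact iff_of_false (fun h => h rfl) fun ⟨_, _, h⟩ => Option.some_ne_none _ h.symm
  · exact iff_of_true (Option.some_ne_none _) ⟨f, hf, rfl⟩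

end NearSemiring

namespace IsAddCong

variable {n : ℕ} {r : N n → N n → Prop}

lemma ofA_xiN_none [NeZero n] (hr : IsAddCong n r)
    (hsome : ∀ k l, r (xiN n (some (k, l))) (xiN n none)) {f : B n → B n} (hf : Aplus n f) :
    r (ofA hf) (xiN n none) := by
  obtain ⟨q, hq⟩ := hf.exists_ofA_add_xiN_eq_self
  simpa only [hq, ofA_add_xiN_none] using hr.add_left (ofA hf) (hsome q q)

lemma iff_theta (hr : IsAddCong n r) (hne : ∀ a b, a ≠ 0 → b ≠ 0 → r a b)
    (hnotuniv : ¬ ∀ a b, r a b) (a b : N n) : r a b ↔ theta n a b := by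
  have hzero : ∀ a, a ≠ 0 → ¬ r 0 a := fun a ha h0a =>
    hnotuniv fun b c => by
      by_cases hb : b = 0 <;> by_cases hc : c = 0
      · rw [hb, hc]; exact hr.refl 0
      · rw [hb]; exact hr.trans h0a (hne a c ha hc)
      · rw [hc]; exact hr.symm (hr.trans h0a (hne a b ha hb))
      · exact hne b c hb hc
  constructor
  · intro hab
    by_cases ha : a = 0 <;> by_cases hb : b = 0
    · exact Or.inr ⟨ha, hb⟩
    · exact absurd (ha ▸ hab) (hzero b hb)
    · exact absurd (hb ▸ hr.symm hab) (hzero a ha)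
    · exact Or.inl ⟨ha, hb⟩
  · rintro (⟨ha, hb⟩ | ⟨rfl, rfl⟩)
    · exact hne a b ha hb
    · exact hr.refl 0

end IsAddCong

namespace IsNSCong

variable {n : ℕ} {r : N n → N n → Prop}

lemma xiN_apply (hr : IsNSCong n r) {f g : B n → B n} {hf : Aplus n f} {hg : Aplus n g}
    (h : r (ofA hf) (ofA hg)) (x : B n) : r (xiN n (f x)) (xiN n (g x)) := by
  simpa only [xiN_mul_ofA] using hr.mul_left (xiN n x) h

/-- Right multiplication by `σ^{(p,q)}_{(k,l)}` sends `ξ_{(p,q)}` to `ξ_{(k,l)}` and every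
other constant to `ξ_ϑ`. -/
lemma xiN_some_xiN_none_of_xiN_some (hr : IsNSCong n r) {p q : Fin n} {d : B n}
    (hd : d ≠ some (p, q)) (h : r (xiN n (some (p, q))) (xiN n d)) (k l : Fin n) :
    r (xiN n (some (k, l))) (xiN n none) := by
  have hsgl := hr.mul_right (sglN n p q k l) h
  simpa only [sglN, xiN_mul_ofA, sgl, if_pos, if_neg hd] using hsgl

lemma xiN_some_xiN_none (hr : IsNSCong n r) {c d : B n} (hcd : c ≠ d)
    (h : r (xiN n c) (xiN n d)) (k l : Fin n) : r (xiN n (some (k, l))) (xiN n none) := by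
  rcases c with _ | ⟨p, q⟩
  · rcases d with _ | ⟨p, q⟩
    · exact absurd rfl hcd
    exact hr.xiN_some_xiN_none_of_xiN_some hcd (hr.symm h) k l
  · exact hr.xiN_some_xiN_none_of_xiN_some (Ne.symm hcd) h k l

end IsNSCong

/-- Let `n ≥ 2` and let `∼` be a non-universal congruence of the near-semiring
`𝒩`. If two distinct nonzero elements of `𝒩` are congruent, then `∼` equals
`(A⁺(Bₙ) × A⁺(Bₙ)) ∪ {(0,0)}`. -/
theorem stmt9 (n : ℕ) (hn : 2 ≤ n) (r : N n → N n → Prop) (hcong : IsNSCong n r)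
    (hnotuniv : ¬ ∀ a b : N n, r a b)
    (f g : N n) (hf0 : f ≠ 0) (hg0 : g ≠ 0) (hfg : f ≠ g) (h : r f g) :
    ∀ a b : N n, r a b ↔ theta n a b := by
  have : NeZero n := ⟨by omega⟩
  obtain ⟨F, hF, rfl⟩ := ne_zero_iff_exists_ofA.mp hf0
  obtain ⟨G, hG, rfl⟩ := ne_zero_iff_exists_ofA.mp hg0
  obtain ⟨x, hx⟩ := Function.ne_iff.mp fun hFG : F = G => hfg (ofA_congr hF hG hFG)
  have hsome := hcong.xiN_some_xiN_none hx (hcong.xiN_apply h x)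
  have hbot : ∀ a : N n, a ≠ 0 → r a (xiN n none) := fun a ha => by
    obtain ⟨H, hH, rfl⟩ := ne_zero_iff_exists_ofA.mp ha
    exact hcong.toIsAddCong.ofA_xiN_none hsome hH
  exact hcong.toIsAddCong.iff_theta
    (fun a b ha hb => hcong.trans (hbot a ha) (hcong.symm (hbot b hb))) hnotuniv
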